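/- arXiv:2003.05765 — 3 statements merged into one kernel-verified Lean document; each statement's English description precedes it below -/
import Mathlib

section
/- For every ω > 0, the function q_ω(x,t) = φ_ω(x) · exp(−i arctan(tanh(√ω x))) · e^{iωt}, where φ_ω(x) = √(4ω / (√ω cosh(2√ω x))), satisfies the Gerdjikov–Ivanov equation i q_t + q_{xx} + i q² \bar{q}_x + (1/2)|q|⁴ q = 0 for all x > 0 and t > 0. -/
open Complex Real

noncomputable def solitonProfile (ω : ℝ) (x : ℝ) : ℝ :=
  Real.sqrt (4 * ω / (Real.sqrt ω * Real.cosh (2 * Real.sqrt ω * x)))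

lemma hasDerivAt_tanh' (y : ℝ) : HasDerivAt Real.tanh (1 / Real.cosh y ^ 2) y := by
  have h := (Real.hasDerivAt_sinh y).div (Real.hasDerivAt_cosh y) (ne_of_gt (Real.cosh_pos y))
  have e : Real.tanh = fun y => Real.sinh y / Real.cosh y := by
    funext z; exact Real.tanh_eq_sinh_div_cosh z
  rw [e]
  convert h using 1
  · rfl
  · rfl
  · rfl
  have := Real.cosh_sq_sub_sinh_sq y
  field_simp
  nlinarith [this]

lemma hasDerivAt_theta (ω : ℝ) (hω : 0 < ω) (y : ℝ) :
    HasDerivAt (fun y => Real.arctan (Real.tanh (Real.sqrt ω * y)))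
      (Real.sqrt ω / Real.cosh (2 * Real.sqrt ω * y)) y := by
  set s := Real.sqrt ω
  have hlin : HasDerivAt (fun y : ℝ => s * y) s y := by
    simpa using (hasDerivAt_id y).const_mul s
  have h1 := (hasDerivAt_tanh' (s * y)).comp y hlin
  have h2 := (Real.hasDerivAt_arctan (Real.tanh (s * y))).comp y h1
  convert h2 using 1
  · rfl
  · rfl
  · rfl
  rw [Real.tanh_eq_sinh_div_cosh]
  have hc := Real.cosh_pos (s * y)
  have h2m : 2 * s * y = 2 * (s * y) := by ring
  rw [h2m, Real.cosh_two_mul]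
  field_simp

lemma profile_pos (ω : ℝ) (hω : 0 < ω) (y : ℝ) : 0 < solitonProfile ω y := by
  apply Real.sqrt_pos.mpr
  have : (0:ℝ) < Real.sqrt ω := Real.sqrt_pos.mpr hω
  positivity

lemma profile_sq (ω : ℝ) (hω : 0 < ω) (y : ℝ) :
    solitonProfile ω y ^ 2 = 4 * Real.sqrt ω / Real.cosh (2 * Real.sqrt ω * y) := by
  rw [solitonProfile, Real.sq_sqrt (by positivity)]
  have hs : Real.sqrt ω * Real.sqrt ω = ω := Real.mul_self_sqrt hω.le
  have hc := (Real.cosh_pos (2 * Real.sqrt ω * y)).ne'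
  have hsp : (Real.sqrt ω) ≠ 0 := (Real.sqrt_pos.mpr hω).ne'
  field_simp
  linear_combination (-1) * hs

lemma hasDerivAt_profile (ω : ℝ) (hω : 0 < ω) (y : ℝ) :
    HasDerivAt (solitonProfile ω)
      (-(Real.sqrt ω * (Real.sinh (2 * Real.sqrt ω * y) / Real.cosh (2 * Real.sqrt ω * y)))
        * solitonProfile ω y) y := by
  set s := Real.sqrt ω with hs
  have hsp : (0:ℝ) < s := Real.sqrt_pos.mpr hω
  have hc := Real.cosh_pos (2 * s * y)
  have hlin : HasDerivAt (fun y : ℝ => 2 * s * y) (2 * s) y := by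
    simpa using (hasDerivAt_id y).const_mul (2 * s)
  have hcosh : HasDerivAt (fun y : ℝ => Real.cosh (2 * s * y))
      (Real.sinh (2 * s * y) * (2 * s)) y := (Real.hasDerivAt_cosh _).comp y hlin
  have hden : HasDerivAt (fun y : ℝ => s * Real.cosh (2 * s * y))
      (s * (Real.sinh (2 * s * y) * (2 * s))) y := hcosh.const_mul s
  have hdenne : s * Real.cosh (2 * s * y) ≠ 0 := by positivity
  have hg : HasDerivAt (fun y : ℝ => 4 * ω / (s * Real.cosh (2 * s * y)))
      ((0 * (s * Real.cosh (2 * s * y)) - 4 * ω * (s * (Real.sinh (2 * s * y) * (2 * s))))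
        / (s * Real.cosh (2 * s * y)) ^ 2) y :=
    (hasDerivAt_const y (4 * ω)).div hden hdenne
  have hgpos : (0:ℝ) < 4 * ω / (s * Real.cosh (2 * s * y)) := by positivity
  have hsqrt := (Real.hasDerivAt_sqrt (ne_of_gt hgpos)).comp y hg
  have heq : solitonProfile ω = fun y => Real.sqrt (4 * ω / (s * Real.cosh (2 * s * y))) := rfl
  rw [heq]
  convert hsqrt using 1
  · rfl
  · rfl
  · rfl
  beta_reduce
  have hP : Real.sqrt (4 * ω / (s * Real.cosh (2 * s * y))) ^ 2
      = 4 * ω / (s * Real.cosh (2 * s * y)) := Real.sq_sqrt hgpos.le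
  have hPpos : (0:ℝ) < Real.sqrt (4 * ω / (s * Real.cosh (2 * s * y))) := Real.sqrt_pos.mpr hgpos
  set P := Real.sqrt (4 * ω / (s * Real.cosh (2 * s * y))) with hPdef
  clear_value P
  have hPne : P ≠ 0 := hPpos.ne'
  have hP' : P ^ 2 * (s * Real.cosh (2 * s * y)) = 4 * ω := by
    rw [hP]; field_simp
  field_simp
  rw [show s * 2 * y = 2 * s * y by ring]
  linear_combination (-2 * s * Real.sinh (2 * s * y)) * hP'
  

noncomputable def solitonGI (ω : ℝ) (x t : ℝ) : ℂ :=
  (solitonProfile ω x : ℂ)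
    * Complex.exp (-Complex.I * (Real.arctan (Real.tanh (Real.sqrt ω * x)) : ℂ))
    * Complex.exp (Complex.I * (ω : ℂ) * t)

noncomputable def D1 (ω t : ℝ) (y : ℝ) : ℂ :=
  ((solitonProfile ω y : ℂ) *
    (-((Real.sqrt ω : ℂ) * ((Real.sinh (2 * Real.sqrt ω * y) : ℂ) / (Real.cosh (2 * Real.sqrt ω * y) : ℂ)))
      - Complex.I * (Real.sqrt ω : ℂ) / (Real.cosh (2 * Real.sqrt ω * y) : ℂ)))
  * Complex.exp (-Complex.I * (Real.arctan (Real.tanh (Real.sqrt ω * y)) : ℂ))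
  * Complex.exp (Complex.I * (ω : ℂ) * t)

lemma hasDerivAt_expTheta (ω : ℝ) (hω : 0 < ω) (t y : ℝ) :
    HasDerivAt (fun y : ℝ => Complex.exp (-Complex.I * (Real.arctan (Real.tanh (Real.sqrt ω * y)) : ℂ)))
      (Complex.exp (-Complex.I * (Real.arctan (Real.tanh (Real.sqrt ω * y)) : ℂ))
        * (-Complex.I * ((Real.sqrt ω / Real.cosh (2 * Real.sqrt ω * y) : ℝ) : ℂ))) y := by
  have h1 : HasDerivAt (fun y : ℝ => ((Real.arctan (Real.tanh (Real.sqrt ω * y)) : ℝ) : ℂ))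
      (((Real.sqrt ω / Real.cosh (2 * Real.sqrt ω * y) : ℝ) : ℂ)) y :=
    (hasDerivAt_theta ω hω y).ofReal_comp
  have h2 := (h1.const_mul (-Complex.I)).cexp
  exact h2

lemma hasDerivAt_solitonGI_x (ω : ℝ) (hω : 0 < ω) (t y : ℝ) :
    HasDerivAt (fun y => solitonGI ω y t) (D1 ω t y) y := by
  have hφ : HasDerivAt (fun y : ℝ => ((solitonProfile ω y : ℝ) : ℂ))
      ((-(Real.sqrt ω * (Real.sinh (2 * Real.sqrt ω * y) / Real.cosh (2 * Real.sqrt ω * y)))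
        * solitonProfile ω y : ℝ) : ℂ) y := (hasDerivAt_profile ω hω y).ofReal_comp
  have h := ((hφ.mul (hasDerivAt_expTheta ω hω t y)).mul_const
    (Complex.exp (Complex.I * (ω : ℂ) * t)))
  have he : (fun y => solitonGI ω y t) =
      (fun y => ((solitonProfile ω y : ℝ) : ℂ)
        * Complex.exp (-Complex.I * (Real.arctan (Real.tanh (Real.sqrt ω * y)) : ℂ))
        * Complex.exp (Complex.I * (ω : ℂ) * t)) := rfl
  rw [he, D1]
  convert h using 1
  · rfl
  · rfl
  all_goals (push_cast; try ring)


lemma deriv_solitonGI_x (ω : ℝ) (hω : 0 < ω) (t : ℝ) :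
    deriv (fun y => solitonGI ω y t) = D1 ω t :=
  funext fun y => (hasDerivAt_solitonGI_x ω hω t y).deriv

lemma hasDerivAt_D1 (ω : ℝ) (hω : 0 < ω) (t x : ℝ) :
    HasDerivAt (D1 ω t)
      ((((-(Real.sqrt ω * (Real.sinh (2 * Real.sqrt ω * x) / Real.cosh (2 * Real.sqrt ω * x)))
            * solitonProfile ω x : ℝ) : ℂ)
          * (-((Real.sqrt ω : ℂ) * ((Real.sinh (2 * Real.sqrt ω * x) : ℂ) / (Real.cosh (2 * Real.sqrt ω * x) : ℂ)))
              - Complex.I * (Real.sqrt ω : ℂ) / (Real.cosh (2 * Real.sqrt ω * x) : ℂ))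
        + (solitonProfile ω x : ℂ) *
          (-(2 * (Real.sqrt ω : ℂ) ^ 2 * ((Real.cosh (2 * Real.sqrt ω * x) : ℂ) ^ 2
              - (Real.sinh (2 * Real.sqrt ω * x) : ℂ) ^ 2) / (Real.cosh (2 * Real.sqrt ω * x) : ℂ) ^ 2)
            + Complex.I * (2 * (Real.sqrt ω : ℂ) ^ 2 * (Real.sinh (2 * Real.sqrt ω * x) : ℂ)
              / (Real.cosh (2 * Real.sqrt ω * x) : ℂ) ^ 2))
        + (solitonProfile ω x : ℂ)
          * (-((Real.sqrt ω : ℂ) * ((Real.sinh (2 * Real.sqrt ω * x) : ℂ) / (Real.cosh (2 * Real.sqrt ω * x) : ℂ)))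
              - Complex.I * (Real.sqrt ω : ℂ) / (Real.cosh (2 * Real.sqrt ω * x) : ℂ))
          * (-Complex.I * (Real.sqrt ω : ℂ) / (Real.cosh (2 * Real.sqrt ω * x) : ℂ)))
        * Complex.exp (-Complex.I * (Real.arctan (Real.tanh (Real.sqrt ω * x)) : ℂ))
        * Complex.exp (Complex.I * (ω : ℂ) * t)) x := by
  set s := Real.sqrt ω with hs
  have hsp : (0:ℝ) < s := Real.sqrt_pos.mpr hω
  have hc := Real.cosh_pos (2 * s * x)
  have hcC : ((Real.cosh (2 * s * x) : ℝ) : ℂ) ≠ 0 := by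
    exact_mod_cast hc.ne'
  have hlin : HasDerivAt (fun y : ℝ => 2 * s * y) (2 * s) x := by
    simpa using (hasDerivAt_id x).const_mul (2 * s)
  have hSh : HasDerivAt (fun y : ℝ => ((Real.sinh (2 * s * y) : ℝ) : ℂ))
      ((Real.cosh (2 * s * x) * (2 * s) : ℝ) : ℂ) x :=
    (((Real.hasDerivAt_sinh _).comp x hlin)).ofReal_comp
  have hCh : HasDerivAt (fun y : ℝ => ((Real.cosh (2 * s * y) : ℝ) : ℂ))
      ((Real.sinh (2 * s * x) * (2 * s) : ℝ) : ℂ) x :=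
    (((Real.hasDerivAt_cosh _).comp x hlin)).ofReal_comp
  have hratio := hSh.div hCh hcC
  have hinv := (hasDerivAt_const x (Complex.I * (s:ℂ))).div hCh hcC
  have hA := ((hratio.const_mul ((s:ℂ))).neg).sub hinv
  have hφ : HasDerivAt (fun y : ℝ => ((solitonProfile ω y : ℝ) : ℂ))
      ((-(s * (Real.sinh (2 * s * x) / Real.cosh (2 * s * x)))
        * solitonProfile ω x : ℝ) : ℂ) x := (hasDerivAt_profile ω hω x).ofReal_comp
  have h := (((hφ.mul hA).mul (hasDerivAt_expTheta ω hω t x)).mul_const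
    (Complex.exp (Complex.I * (ω : ℂ) * t)))
  have he : D1 ω t = fun y =>
      (((solitonProfile ω y : ℝ) : ℂ) *
        (-((s : ℂ) * ((Real.sinh (2 * s * y) : ℂ) / (Real.cosh (2 * s * y) : ℂ)))
          - Complex.I * (s : ℂ) / (Real.cosh (2 * s * y) : ℂ)))
      * Complex.exp (-Complex.I * (Real.arctan (Real.tanh (s * y)) : ℂ))
      * Complex.exp (Complex.I * (ω : ℂ) * t) := rfl
  rw [he]
  convert h using 1
  · rfl
  · rfl
  have hC2 : ((Real.cosh (2*s*x):ℝ):ℂ) ^ 2 ≠ 0 := pow_ne_zero _ hcC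
  rw [← hs]
  simp only [Pi.mul_apply, Pi.sub_apply, Pi.neg_apply, Pi.div_apply]
  push_cast
  ring_nf

lemma hasDerivAt_solitonGI_t (ω : ℝ) (x t : ℝ) :
    HasDerivAt (fun τ => solitonGI ω x τ) (Complex.I * (ω:ℂ) * solitonGI ω x t) t := by
  have h1 : HasDerivAt (fun τ : ℝ => ((τ : ℝ) : ℂ)) 1 t := by
    simpa using (hasDerivAt_id t).ofReal_comp
  have h2 := ((h1.const_mul (Complex.I * (ω:ℂ))).cexp).const_mul
    ((solitonProfile ω x : ℂ)
      * Complex.exp (-Complex.I * (Real.arctan (Real.tanh (Real.sqrt ω * x)) : ℂ)))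
  have he : (fun τ => solitonGI ω x τ) = fun τ : ℝ =>
      ((solitonProfile ω x : ℂ)
        * Complex.exp (-Complex.I * (Real.arctan (Real.tanh (Real.sqrt ω * x)) : ℂ)))
      * Complex.exp (Complex.I * (ω:ℂ) * (τ:ℂ)) := rfl
  rw [he, solitonGI]
  convert h2 using 1
  · rfl
  ring

lemma conj_solitonGI (ω : ℝ) (t : ℝ) :
    (fun y => (starRingEnd ℂ) (solitonGI ω y t)) = fun y =>
      (solitonProfile ω y : ℂ)
        * Complex.exp (Complex.I * (Real.arctan (Real.tanh (Real.sqrt ω * y)) : ℂ))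
        * Complex.exp (-(Complex.I * (ω : ℂ) * t)) := by
  funext y
  simp only [solitonGI, map_mul, ← Complex.exp_conj, map_neg, Complex.conj_I,
    Complex.conj_ofReal]
  ring_nf

lemma hasDerivAt_conj (ω : ℝ) (hω : 0 < ω) (t x : ℝ) :
    HasDerivAt (fun y => (solitonProfile ω y : ℂ)
        * Complex.exp (Complex.I * (Real.arctan (Real.tanh (Real.sqrt ω * y)) : ℂ))
        * Complex.exp (-(Complex.I * (ω : ℂ) * t)))
      ((((-(Real.sqrt ω * (Real.sinh (2 * Real.sqrt ω * x) / Real.cosh (2 * Real.sqrt ω * x)))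
            * solitonProfile ω x : ℝ) : ℂ)
          * Complex.exp (Complex.I * (Real.arctan (Real.tanh (Real.sqrt ω * x)) : ℂ))
        + (solitonProfile ω x : ℂ)
          * (Complex.exp (Complex.I * (Real.arctan (Real.tanh (Real.sqrt ω * x)) : ℂ))
            * (Complex.I * ((Real.sqrt ω / Real.cosh (2 * Real.sqrt ω * x) : ℝ) : ℂ))))
        * Complex.exp (-(Complex.I * (ω : ℂ) * t))) x := by
  have hφ : HasDerivAt (fun y : ℝ => ((solitonProfile ω y : ℝ) : ℂ))
      ((-(Real.sqrt ω * (Real.sinh (2 * Real.sqrt ω * x) / Real.cosh (2 * Real.sqrt ω * x)))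
        * solitonProfile ω x : ℝ) : ℂ) x := (hasDerivAt_profile ω hω x).ofReal_comp
  have h1 : HasDerivAt (fun y : ℝ => ((Real.arctan (Real.tanh (Real.sqrt ω * y)) : ℝ) : ℂ))
      (((Real.sqrt ω / Real.cosh (2 * Real.sqrt ω * x) : ℝ) : ℂ)) x :=
    (hasDerivAt_theta ω hω x).ofReal_comp
  have hexp2 := (h1.const_mul Complex.I).cexp
  exact (hφ.mul hexp2).mul_const _

lemma abs_solitonGI (ω : ℝ) (hω : 0 < ω) (x t : ℝ) :
    ‖solitonGI ω x t‖ = solitonProfile ω x := by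
  have e1 : -Complex.I * ((Real.arctan (Real.tanh (Real.sqrt ω * x)) : ℝ) : ℂ)
      = ((-(Real.arctan (Real.tanh (Real.sqrt ω * x))) : ℝ) : ℂ) * Complex.I := by
    push_cast; ring
  have e2 : Complex.I * (ω : ℂ) * (t : ℂ) = ((ω * t : ℝ) : ℂ) * Complex.I := by
    push_cast; ring
  rw [solitonGI, norm_mul, norm_mul, e1, e2, Complex.norm_exp_ofReal_mul_I,
    Complex.norm_exp_ofReal_mul_I, Complex.norm_real, Real.norm_eq_abs, abs_of_pos (profile_pos ω hω x)]
  ring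

noncomputable def GIop (q : ℝ → ℝ → ℂ) (x t : ℝ) : ℂ :=
  Complex.I * deriv (fun τ => q x τ) t
    + deriv (deriv (fun y => q y t)) x
    + Complex.I * (q x t) ^ 2 * deriv (fun y => (starRingEnd ℂ) (q y t)) x
    + (1 / 2 : ℂ) * (((‖q x t‖ : ℝ) : ℂ)) ^ 4 * q x t

theorem soliton_solves_GI (ω : ℝ) (hω : 0 < ω) :
    ∀ x t : ℝ, 0 < x → 0 < t → GIop (solitonGI ω) x t = 0 := by
  intro x t hx ht
  rw [GIop, (hasDerivAt_solitonGI_t ω x t).deriv, deriv_solitonGI_x ω hω t,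
    (hasDerivAt_D1 ω hω t x).deriv, conj_solitonGI ω t,
    (hasDerivAt_conj ω hω t x).deriv, abs_solitonGI ω hω x t, solitonGI]
  set s := Real.sqrt ω with hsdef
  have hsp : (0:ℝ) < s := Real.sqrt_pos.mpr hω
  have hcR := Real.cosh_pos (2 * s * x)
  have hPp := profile_pos ω hω x
  have hs2 : ((s:ℂ))^2 = (ω:ℂ) := by
    have := Real.sq_sqrt hω.le; exact_mod_cast this
  have hP2R : (solitonProfile ω x)^2 * Real.cosh (2 * s * x) = 4 * s := by
    rw [profile_sq ω hω x, ← hsdef]; field_simp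
  have hP2 : ((solitonProfile ω x : ℝ):ℂ)^2 * ((Real.cosh (2 * s * x) : ℝ):ℂ) = 4 * (s:ℂ) := by
    exact_mod_cast hP2R
  have hid : ((Real.cosh (2*s*x) : ℝ):ℂ)^2 - ((Real.sinh (2*s*x) : ℝ):ℂ)^2 = 1 := by
    exact_mod_cast Real.cosh_sq_sub_sinh_sq (2*s*x)
  have hC : ((Real.cosh (2*s*x) : ℝ):ℂ) ≠ 0 := by exact_mod_cast hcR.ne'
  have hE1 : Complex.exp (Complex.I * (Real.arctan (Real.tanh (s * x)) : ℂ))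
      * Complex.exp (-Complex.I * (Real.arctan (Real.tanh (s * x)) : ℂ)) = 1 := by
    rw [← Complex.exp_add]; ring_nf; exact Complex.exp_zero
  have hE2 : Complex.exp (Complex.I * (ω:ℂ) * (t:ℂ)) * Complex.exp (-(Complex.I * (ω:ℂ) * (t:ℂ))) = 1 := by
    rw [← Complex.exp_add]; ring_nf; exact Complex.exp_zero
  push_cast
  push_cast at hP2 hid hC hE1 hE2
  ring_nf
  have h1 : Complex.exp (Complex.I * (Complex.tanh ((s:ℂ) * (x:ℂ))).arctan)
      = (Complex.exp (-(Complex.I * (Complex.tanh ((s:ℂ) * (x:ℂ))).arctan)))⁻¹ := by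
    rw [← Complex.exp_neg, neg_neg]
  have h2 : Complex.exp (-(Complex.I * (ω:ℂ) * (t:ℂ)))
      = (Complex.exp (Complex.I * (ω:ℂ) * (t:ℂ)))⁻¹ := Complex.exp_neg _
  rw [h1, h2]
  have hI : (Complex.I)^2 = -1 := Complex.I_sq
  ring_nf at hC hP2 hid
  have hEi : Complex.exp (-(Complex.I * (Complex.tanh ((s:ℂ) * (x:ℂ))).arctan)) * (Complex.exp (-(Complex.I * (Complex.tanh ((s:ℂ) * (x:ℂ))).arctan)))⁻¹ = 1 := mul_inv_cancel₀ (Complex.exp_ne_zero _)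
  have hFi : Complex.exp (Complex.I * (ω:ℂ) * (t:ℂ)) * (Complex.exp (Complex.I * (ω:ℂ) * (t:ℂ)))⁻¹ = 1 := mul_inv_cancel₀ (Complex.exp_ne_zero _)
  have hu : Complex.cosh ((s:ℂ) * (x:ℂ) * 2) * (Complex.cosh ((s:ℂ) * (x:ℂ) * 2))⁻¹ = 1 := mul_inv_cancel₀ hC
  linear_combination ((((solitonProfile ω x : ℝ) : ℂ) ^ 3 * (s:ℂ) * (Complex.cosh ((s:ℂ) * (x:ℂ) * 2))⁻¹ * (-(Complex.I) * Complex.sinh ((s:ℂ) * (x:ℂ) * 2) + Complex.I ^ 2)) * Complex.exp (-(Complex.I * (Complex.tanh ((s:ℂ) * (x:ℂ))).arctan)) * Complex.exp (Complex.I * (ω:ℂ) * (t:ℂ)) * Complex.exp (Complex.I * (ω:ℂ) * (t:ℂ)) * (Complex.exp (Complex.I * (ω:ℂ) * (t:ℂ)))⁻¹) * hEi + ((((solitonProfile ω x : ℝ) : ℂ) ^ 3 * (s:ℂ) * (Complex.cosh ((s:ℂ) * (x:ℂ) * 2))⁻¹ * (-(Complex.I) * Complex.sinh ((s:ℂ)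 * (x:ℂ) * 2) + Complex.I ^ 2)) * Complex.exp (-(Complex.I * (Complex.tanh ((s:ℂ) * (x:ℂ))).arctan)) * Complex.exp (Complex.I * (ω:ℂ) * (t:ℂ))) * hFi
    + (Complex.exp (-(Complex.I * (Complex.tanh ((s:ℂ) * (x:ℂ))).arctan)) * Complex.exp (Complex.I * (ω:ℂ) * (t:ℂ)) * ((solitonProfile ω x : ℝ) : ℂ) * ((s:ℂ) ^ 2 * (Complex.cosh ((s:ℂ) * (x:ℂ) * 2) * (Complex.cosh ((s:ℂ) * (x:ℂ) * 2))⁻¹ + 1) - ((solitonProfile ω x : ℝ) : ℂ) ^ 2 * ((s:ℂ) * (Complex.cosh ((s:ℂ) * (x:ℂ) * 2))⁻¹ * (-(Complex.I) * Complex.sinh ((s:ℂ) * (x:ℂ) * 2) + Complex.I ^ 2) + (((solitonProfile ω x : ℝ) : ℂ) ^ 2 + 4 * (s:ℂ) * (Complex.cosh ((s:ℂ) * (x:ℂ) * 2))⁻¹) / 2))) * hu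
    + (Complex.exp (-(Complex.I * (Complex.tanh ((s:ℂ) * (x:ℂ))).arctan)) * Complex.exp (Complex.I * (ω:ℂ) * (t:ℂ)) * ((solitonProfile ω x : ℝ) : ℂ) * (Complex.cosh ((s:ℂ) * (x:ℂ) * 2))⁻¹ * ((s:ℂ) * (Complex.cosh ((s:ℂ) * (x:ℂ) * 2))⁻¹ * (-(Complex.I) * Complex.sinh ((s:ℂ) * (x:ℂ) * 2) + Complex.I ^ 2) + (((solitonProfile ω x : ℝ) : ℂ) ^ 2 + 4 * (s:ℂ) * (Complex.cosh ((s:ℂ) * (x:ℂ) * 2))⁻¹) / 2)) * hP2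
    + (-3 * Complex.exp (-(Complex.I * (Complex.tanh ((s:ℂ) * (x:ℂ))).arctan)) * Complex.exp (Complex.I * (ω:ℂ) * (t:ℂ)) * ((solitonProfile ω x : ℝ) : ℂ) * (s:ℂ) ^ 2 * (Complex.cosh ((s:ℂ) * (x:ℂ) * 2))⁻¹ ^ 2) * hid + (Complex.exp (-(Complex.I * (Complex.tanh ((s:ℂ) * (x:ℂ))).arctan)) * Complex.exp (Complex.I * (ω:ℂ) * (t:ℂ)) * ((solitonProfile ω x : ℝ) : ℂ)) * hs2
    + (Complex.exp (-(Complex.I * (Complex.tanh ((s:ℂ) * (x:ℂ))).arctan)) * Complex.exp (Complex.I * (ω:ℂ) * (t:ℂ)) * ((solitonProfile ω x : ℝ) : ℂ) * (5 * (s:ℂ) ^ 2 * (Complex.cosh ((s:ℂ) * (x:ℂ) * 2))⁻¹ ^ 2 + (ω:ℂ))) * hI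
end

section
/- If Re(c) = 0 and Im(c)² + α²ω = α⁶/2 + α³ Im(c) (the plane wave parameter conditions), then with b = Im(c)/α the polynomial Ω²(k) := 4k⁸ + 2ωk⁴ − ((α⁶ − 2α²ω + 2|c|² + 4α³Im(c))/2)k² + (α⁴ + 4αIm(c) − 2ω)²/16 factorizes as Ω²(k) = (1/4)(b − 2k²)²((b + 2k²)² + α²(2b + α²)). -/
open Complex

theorem Omega_sq_factorization_planeWave (α ω : ℝ) (c : ℂ)
    (hα : 0 < α) (hre : c.re = 0)
    (h : c.im ^ 2 + α ^ 2 * ω = α ^ 6 / 2 + α ^ 3 * c.im) :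
    ∀ k : ℂ,
      4 * k ^ 8 + 2 * (ω : ℂ) * k ^ 4
        - (((α ^ 6 - 2 * α ^ 2 * ω + 2 * ‖c‖ ^ 2 + 4 * α ^ 3 * c.im) / 2 : ℝ) : ℂ) * k ^ 2
        + ((((α ^ 4 + 4 * α * c.im - 2 * ω) ^ 2 / 16 : ℝ)) : ℂ)
      = (1 / 4) * (((c.im / α : ℝ) : ℂ) - 2 * k ^ 2) ^ 2
          * ((((c.im / α : ℝ) : ℂ) + 2 * k ^ 2) ^ 2
            + (α : ℂ) ^ 2 * (2 * ((c.im / α : ℝ) : ℂ) + (α : ℂ) ^ 2)) := by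
  intro k
  have hα' : (α : ℝ) ≠ 0 := ne_of_gt hα
  have habs : ‖c‖ ^ 2 = c.im ^ 2 := by
    rw [Complex.sq_norm, Complex.normSq_apply, hre]; ring
  have hω : ω = (α ^ 6 / 2 + α ^ 3 * c.im - c.im ^ 2) / α ^ 2 := by
    field_simp at h ⊢; linarith
  subst hω
  rw [habs]
  have hαC : (α : ℂ) ≠ 0 := by exact_mod_cast hα'
  push_cast [hα']
  field_simp [hαC]
  ring
end

section
/- Suppose α > 0, ω ∈ ℝ, c ∈ ℂ satisfy α⁶ − 2α²ω + 2|c|² + 4α³Im(c) = 0 and (2ω)² = (α⁴ + 4αIm(c) − 2ω)² (i.e., X₂ = 0 and X₁² = 16X₃). Then either ω ≥ α⁴/16 and c = ±α√(ω − α⁴/16) − i α³/4, or ω = −α⁴/4 and c = −i α³/2. -/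
open Complex

set_option maxHeartbeats 1000000

theorem degenerate_case_classification (α ω : ℝ) (c : ℂ) (hα : 0 < α)
    (hX2 : α ^ 6 - 2 * α ^ 2 * ω + 2 * ‖c‖ ^ 2 + 4 * α ^ 3 * c.im = 0)
    (hdisc : (2 * ω) ^ 2 = (α ^ 4 + 4 * α * c.im - 2 * ω) ^ 2) :
    (ω ≥ α ^ 4 / 16 ∧
      (c = ((α * Real.sqrt (ω - α ^ 4 / 16) : ℝ) : ℂ) - Complex.I * (α : ℂ) ^ 3 / 4 ∨
       c = -((α * Real.sqrt (ω - α ^ 4 / 16) : ℝ) : ℂ) - Complex.I * (α : ℂ) ^ 3 / 4)) ∨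
    (ω = -α ^ 4 / 4 ∧ c = -Complex.I * (α : ℂ) ^ 3 / 2) := by
  set x := c.re with hx
  set y := c.im with hy
  have habs : ‖c‖ ^ 2 = x ^ 2 + y ^ 2 := by
    rw [Complex.sq_norm, Complex.normSq_apply]; ring
  rw [habs] at hX2
  have hfac : (2 * ω - (α ^ 4 + 4 * α * y - 2 * ω)) *
      (2 * ω + (α ^ 4 + 4 * α * y - 2 * ω)) = 0 := by nlinarith [hdisc]
  rcases mul_eq_zero.mp hfac with h | h
  · -- 4ω = α⁴ + 4αy : leads to ω = -α⁴/4 branch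
    right
    have hy' : y = (4 * ω - α ^ 4) / (4 * α) := by
      field_simp
      nlinarith [h]
    have hsum : x ^ 2 + y ^ 2 = -α ^ 2 * ω := by
      have h4 : 4 * α ^ 3 * y = 4 * α ^ 2 * ω - α ^ 6 := by
        rw [hy']; field_simp
      nlinarith [hX2, h4]
    have hωeq : ω = -α ^ 4 / 4 := by nlinarith [sq_nonneg x, sq_nonneg (4 * ω + α ^ 4), hsum, hy', sq_nonneg α, hα, mul_pos hα hα]
    refine ⟨hωeq, ?_⟩
    have hyv : y = -α ^ 3 / 2 := by rw [hy', hωeq]; field_simp; ring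
    have hxv : x = 0 := by nlinarith [hsum, hωeq, hyv, sq_nonneg x]
    apply Complex.ext
    · simp [← hx, hxv, ← Complex.ofReal_pow]
    · simp [← hy, hyv, ← Complex.ofReal_pow]
  · -- α⁴ + 4αy = 0 : y = -α³/4 branch
    left
    have hyv : y = -α ^ 3 / 4 := by
      have : 4 * α * y = -α ^ 4 := by linarith
      field_simp
      nlinarith [this]
    have hxsq : x ^ 2 = α ^ 2 * (ω - α ^ 4 / 16) := by nlinarith [hX2, hyv]
    have hω : ω ≥ α ^ 4 / 16 := by nlinarith [sq_nonneg x, mul_pos hα hα]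
    refine ⟨hω, ?_⟩
    have hs : (α * Real.sqrt (ω - α ^ 4 / 16)) ^ 2 = α ^ 2 * (ω - α ^ 4 / 16) := by
      rw [mul_pow, Real.sq_sqrt (by linarith)]
    have hsnn : 0 ≤ α * Real.sqrt (ω - α ^ 4 / 16) :=
      mul_nonneg hα.le (Real.sqrt_nonneg _)
    set s := α * Real.sqrt (ω - α ^ 4 / 16) with hsdef
    have hfac2 : (x - s) * (x + s) = 0 := by linear_combination hxsq - hs
    have hxor : x = s ∨ x = -s := by
      rcases mul_eq_zero.mp hfac2 with h2 | h2
      · left; linarith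
      · right; linarith
    rcases hxor with hxe | hxe
    · left
      apply Complex.ext
      · simp [← hx, hxe, hsdef, ← Complex.ofReal_pow]
      · simp [← hy, hyv, ← Complex.ofReal_pow]; ring
    · right
      apply Complex.ext
      · simp [← hx, hxe, hsdef, ← Complex.ofReal_pow]
      · simp [← hy, hyv, ← Complex.ofReal_pow]; ring
end
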